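/- Let (U₁, V₁, A₁, φ₁) and (U₂, V₂, A₂, φ₂) be labeled bipartite digraphs. Let W be a finite set of natural numbers containing τ(d₋₁(u₁) + d₋₂(u₂)) and τ(d₊₁(u₁) + d₊₂(u₂)) for every u₁ ∈ U₁ and u₂ ∈ U₂. Define the polynomial-product digraph with parts U₁ × U₂ and W by declaring an arc from n ∈ W to (u₁, u₂) iff Nat.testBit (d₋₁(u₁) + d₋₂(u₂)) n = true, and an arc from (u₁, u₂) to n ∈ W iff Nat.testBit (d₊₁(u₁) + d₊₂(u₂)) n = true, and label W by the (injective) inclusion map W ↪ ℕ. Then the digraph polynomial of this product digraph equals p(A₁, φ₁) · p(A₂, φ₂). -/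

import Mathlib

/-- `dMinus Ain φ u = ∑_{v : Ain v u} 2 ^ (φ v)`. -/
noncomputable def dMinus {U V : Type*} [Fintype V]
    (Ain : V → U → Prop) (φ : V → ℕ) (u : U) : ℕ :=
  letI := Classical.dec
  ∑ v ∈ Finset.univ.filter (fun v => Ain v u), 2 ^ φ v

/-- `dPlus Aout φ u = ∑_{v : Aout u v} 2 ^ (φ v)`. -/
noncomputable def dPlus {U V : Type*} [Fintype V]
    (Aout : U → V → Prop) (φ : V → ℕ) (u : U) : ℕ :=
  letI := Classical.dec
  ∑ v ∈ Finset.univ.filter (fun v => Aout u v), 2 ^ φ v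

/-- The digraph polynomial `p(A, φ) = ∑_{u : U} X ^ (d₋ u) * Y ^ (d₊ u)` in `ℕ[X, Y]`,
realized as `MvPolynomial (Fin 2) ℕ` with `X = X 0` and `Y = X 1`. -/
noncomputable def digraphPoly {U V : Type*} [Fintype U] [Fintype V]
    (Ain : V → U → Prop) (Aout : U → V → Prop) (φ : V → ℕ) : MvPolynomial (Fin 2) ℕ :=
  ∑ u : U, MvPolynomial.X 0 ^ dMinus Ain φ u * MvPolynomial.X 1 ^ dPlus Aout φ u

/-
The product digraph is built so that the in- and out-labels of `(u₁, u₂)` are exactly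
`d₋₁(u₁) + d₋₂(u₂)` and `d₊₁(u₁) + d₊₂(u₂)`: its arcs at `(u₁, u₂)` come from the binary digits
of these numbers, and a number is the sum of `2 ^ n` over its binary digits `n`. The monomial of
`(u₁, u₂)` is then the product of the monomials of `u₁` and `u₂`, and summing over `U₁ × U₂`
factors the polynomial.
-/

theorem Nat.sum_filter_testBit_two_pow {k : ℕ} {W : Finset ℕ}
    (hW : ∀ n, k.testBit n = true → n ∈ W) :
    ∑ n ∈ W with k.testBit n = true, 2 ^ n = k := by
  have hbits : {n ∈ W | k.testBit n = true} = k.bitIndices.toFinset := by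
    ext n
    simp only [Finset.mem_filter, List.mem_toFinset, Nat.mem_bitIndices]
    exact ⟨And.right, fun hn => ⟨hW n hn, hn⟩⟩
  rw [hbits, Finset.sum_toFinset_bitIndices_two_pow]

section BinaryDigitArcs

variable {U : Type*} (k : U → ℕ) (W : Finset ℕ) (u : U)

theorem dMinus_testBit (hW : ∀ n, (k u).testBit n = true → n ∈ W) :
    dMinus (fun (n : W) (u : U) => (k u).testBit n = true) (fun n : W => (n : ℕ)) u = k u := by
  calc _ = ∑ n ∈ W, if (k u).testBit n = true then 2 ^ n else 0 := by
        rw [dMinus, Finset.sum_filter, ← Finset.sum_coe_sort W]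
        congr!
    _ = k u := by rw [← Finset.sum_filter, Nat.sum_filter_testBit_two_pow hW]

theorem dPlus_testBit (hW : ∀ n, (k u).testBit n = true → n ∈ W) :
    dPlus (fun (u : U) (n : W) => (k u).testBit n = true) (fun n : W => (n : ℕ)) u = k u :=
  dMinus_testBit k W u hW

end BinaryDigitArcs

theorem digraphPoly_polynomialProduct_general {U₁ V₁ U₂ V₂ : Type*}
    [Fintype U₁] [Fintype V₁] [Fintype U₂] [Fintype V₂]
    (Ain₁ : V₁ → U₁ → Prop) (Aout₁ : U₁ → V₁ → Prop)
    (Ain₂ : V₂ → U₂ → Prop) (Aout₂ : U₂ → V₂ → Prop)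
    (φ₁ : V₁ → ℕ) (φ₂ : V₂ → ℕ)
    (W : Finset ℕ)
    (hW : ∀ (u₁ : U₁) (u₂ : U₂) (n : ℕ),
      (Nat.testBit (dMinus Ain₁ φ₁ u₁ + dMinus Ain₂ φ₂ u₂) n = true ∨
       Nat.testBit (dPlus Aout₁ φ₁ u₁ + dPlus Aout₂ φ₂ u₂) n = true) → n ∈ W) :
    digraphPoly
      (fun (n : W) (p : U₁ × U₂) =>
        Nat.testBit (dMinus Ain₁ φ₁ p.1 + dMinus Ain₂ φ₂ p.2) (n : ℕ) = true)
      (fun (p : U₁ × U₂) (n : W) =>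
        Nat.testBit (dPlus Aout₁ φ₁ p.1 + dPlus Aout₂ φ₂ p.2) (n : ℕ) = true)
      (fun n : W => (n : ℕ))
    = digraphPoly Ain₁ Aout₁ φ₁ * digraphPoly Ain₂ Aout₂ φ₂ := by
  simp only [digraphPoly]
  rw [Finset.sum_mul_sum, Fintype.sum_prod_type]
  refine Finset.sum_congr rfl fun u₁ _ => Finset.sum_congr rfl fun u₂ _ => ?_
  rw [dMinus_testBit (fun p : U₁ × U₂ => dMinus Ain₁ φ₁ p.1 + dMinus Ain₂ φ₂ p.2) W (u₁, u₂)
      fun n hn => hW u₁ u₂ n (.inl hn),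
    dPlus_testBit (fun p : U₁ × U₂ => dPlus Aout₁ φ₁ p.1 + dPlus Aout₂ φ₂ p.2) W (u₁, u₂)
      fun n hn => hW u₁ u₂ n (.inr hn),
    pow_add, pow_add]
  ring

theorem digraphPoly_polynomialProduct {U₁ V₁ U₂ V₂ : Type*}
    [Fintype U₁] [Fintype V₁] [Fintype U₂] [Fintype V₂]
    (Ain₁ : V₁ → U₁ → Prop) (Aout₁ : U₁ → V₁ → Prop)
    (Ain₂ : V₂ → U₂ → Prop) (Aout₂ : U₂ → V₂ → Prop)
    (φ₁ : V₁ → ℕ) (φ₂ : V₂ → ℕ)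
    (hφ₁ : Function.Injective φ₁) (hφ₂ : Function.Injective φ₂)
    (W : Finset ℕ)
    (hW : ∀ (u₁ : U₁) (u₂ : U₂) (n : ℕ),
      (Nat.testBit (dMinus Ain₁ φ₁ u₁ + dMinus Ain₂ φ₂ u₂) n = true ∨
       Nat.testBit (dPlus Aout₁ φ₁ u₁ + dPlus Aout₂ φ₂ u₂) n = true) → n ∈ W) :
    digraphPoly
      (fun (n : W) (p : U₁ × U₂) =>
        Nat.testBit (dMinus Ain₁ φ₁ p.1 + dMinus Ain₂ φ₂ p.2) (n : ℕ) = true)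
      (fun (p : U₁ × U₂) (n : W) =>
        Nat.testBit (dPlus Aout₁ φ₁ p.1 + dPlus Aout₂ φ₂ p.2) (n : ℕ) = true)
      (fun n : W => (n : ℕ))
    = digraphPoly Ain₁ Aout₁ φ₁ * digraphPoly Ain₂ Aout₂ φ₂ :=
  digraphPoly_polynomialProduct_general Ain₁ Aout₁ Ain₂ Aout₂ φ₁ φ₂ W hW
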